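/- Let n ≥ 3 and let f = (f_0, …, f_n) be given by f_k = a_0^{n−k} b_0^k + a_1^{n−k} b_1^k, where v_0 = (a_0, b_0) and v_1 = (a_1, b_1) are linearly independent vectors in ℂ². If f ∈ 𝒫₁, then a_0 a_1 + b_0 b_1 = 0 (i.e., θ(v_0, v_1) = 0). -/

import Mathlib

/-!
A signature in `𝒫₁` is `c (u^{⊗n} + β w^{⊗n})` with `u = H(1,1)`, `w = H(1,-1)` nonzero and
orthogonal for the bilinear dot product, since `HᵀH = 1`. Every such signature satisfies the
second-order linear recurrence whose characteristic form `Q(x) = (u₀x₁ - u₁x₀)(w₀x₁ - w₁x₀)`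
vanishes at `u` and `w`. Applied to `v₀^{⊗n} + v₁^{⊗n}` the recurrence leaves
`Q(v₀) v₀^{⊗(n-2)} + Q(v₁) v₁^{⊗(n-2)} = 0`; as `n - 2 ≥ 1`, the tensor powers of independent
vectors are independent, so `Q(v₀) = Q(v₁) = 0`. Thus each `vᵢ` is parallel to `u` or to `w`,
not both to the same one, and `v₀ ⊥ v₁` follows from `u ⊥ w`.
-/

/-- `f ∈ 𝒫₁`: there exist `H ∈ O₂(ℂ)` and nonzero `c, β ∈ ℂ` such that
`f = c ((H(1,1))^{⊗n} + β (H(1,-1))^{⊗n})`. -/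
def MemP1 (n : ℕ) (f : ℕ → ℂ) : Prop :=
  ∃ (H : Matrix (Fin 2) (Fin 2) ℂ) (c β : ℂ),
    H.transpose * H = 1 ∧ c ≠ 0 ∧ β ≠ 0 ∧
    ∀ k ≤ n, f k = c * (H.mulVec ![1, 1] 0 ^ (n - k) * H.mulVec ![1, 1] 1 ^ k +
      β * (H.mulVec ![1, -1] 0 ^ (n - k) * H.mulVec ![1, -1] 1 ^ k))

section CommRing

variable {R : Type*} [CommRing R]

def tensorPow (n : ℕ) (v : R × R) (k : ℕ) : R := v.1 ^ (n - k) * v.2 ^ k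

def wedge (p x : R × R) : R := p.1 * x.2 - p.2 * x.1

@[simp]
theorem wedge_self (p : R × R) : wedge p p = 0 := by
  rw [wedge]; ring

/-- The residual at `k` of the linear recurrence with characteristic form `wedge p · wedge q`. -/
def recurrenceResidual (p q : R × R) (f : ℕ → R) (k : ℕ) : R :=
  p.2 * q.2 * f k - (p.1 * q.2 + p.2 * q.1) * f (k + 1) + p.1 * q.1 * f (k + 2)

theorem recurrenceResidual_tensorPow (p q v : R × R) {n k : ℕ} (hk : k + 2 ≤ n) :
    recurrenceResidual p q (tensorPow n v) k =
      wedge p v * wedge q v * tensorPow (n - 2) v k := by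
  obtain ⟨j, rfl⟩ : ∃ j, n = j + k + 2 := ⟨n - k - 2, by omega⟩
  simp only [recurrenceResidual, tensorPow, wedge,
    show j + k + 2 - k = j + 2 by omega, show j + k + 2 - (k + 1) = j + 1 by omega,
    show j + k + 2 - (k + 2) = j by omega, show j + k + 2 - 2 - k = j by omega]
  ring

theorem recurrenceResidual_eq {f : ℕ → R} {n k : ℕ} (p q x y : R × R) {α β : R}
    (hf : ∀ i ≤ n, f i = α * tensorPow n x i + β * tensorPow n y i) (hk : k + 2 ≤ n) :
    recurrenceResidual p q f k =
      α * (wedge p x * wedge q x) * tensorPow (n - 2) x k +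
        β * (wedge p y * wedge q y) * tensorPow (n - 2) y k := by
  have hx := recurrenceResidual_tensorPow p q x hk
  have hy := recurrenceResidual_tensorPow p q y hk
  simp only [recurrenceResidual] at hx hy ⊢
  rw [hf k (by omega), hf (k + 1) (by omega), hf (k + 2) hk]
  linear_combination α * hx + β * hy

theorem dot_eq_zero_of_mem_span_singleton {p q x y : R × R} (hx : x ∈ R ∙ p)
    (hy : y ∈ R ∙ q) (hpq : p.1 * q.1 + p.2 * q.2 = 0) : x.1 * y.1 + x.2 * y.2 = 0 := by
  obtain ⟨s, rfl⟩ := Submodule.mem_span_singleton.1 hx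
  obtain ⟨t, rfl⟩ := Submodule.mem_span_singleton.1 hy
  simp only [Prod.smul_fst, Prod.smul_snd, smul_eq_mul]
  linear_combination s * t * hpq

end CommRing

section Field

variable {K : Type*} [Field K]

theorem LinearIndependent.coeffs_eq_zero_of_tensorPow {x y : K × K}
    (hli : LinearIndependent K ![x, y]) {m : ℕ} (hm : 1 ≤ m) {l₀ l₁ : K}
    (h : ∀ k ≤ m, l₀ * tensorPow m x k + l₁ * tensorPow m y k = 0) : l₀ = 0 ∧ l₁ = 0 := by
  induction m, hm using Nat.le_induction generalizing l₀ l₁ with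
  | base =>
    refine LinearIndependent.pair_iff.1 hli l₀ l₁ (Prod.ext ?_ ?_)
    · simpa [tensorPow] using h 0 zero_le_one
    · simpa [tensorPow] using h 1 le_rfl
  | succ m hm ih =>
    -- `x^{⊗(m+1)}` contains `x.1 • x^{⊗m}` and `x.2 • x^{⊗m}` as runs of consecutive entries
    obtain ⟨hx₁, hy₁⟩ := ih (l₀ := l₀ * x.1) (l₁ := l₁ * y.1) fun k hk => by
      have := h k (by omega)
      simp only [tensorPow, show m + 1 - k = m - k + 1 by omega, pow_succ] at this ⊢
      linear_combination this
    obtain ⟨hx₂, hy₂⟩ := ih (l₀ := l₀ * x.2) (l₁ := l₁ * y.2) fun k hk => by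
      have := h (k + 1) (by omega)
      simp only [tensorPow, show m + 1 - (k + 1) = m - k by omega, pow_succ] at this ⊢
      linear_combination this
    have coeff_eq_zero : ∀ {l : K} {v : K × K}, v ≠ 0 → l * v.1 = 0 → l * v.2 = 0 → l = 0 :=
      fun {l v} hv h₁ h₂ => by
        by_contra hl
        exact hv (Prod.ext (by simpa [hl] using h₁) (by simpa [hl] using h₂))
    exact ⟨coeff_eq_zero (hli.ne_zero 0) hx₁ hx₂, coeff_eq_zero (hli.ne_zero 1) hy₁ hy₂⟩

theorem mem_span_singleton_of_wedge_eq_zero {p x : K × K} (hp : p ≠ 0) (h : wedge p x = 0) :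
    x ∈ K ∙ p := by
  rw [Submodule.mem_span_singleton]
  unfold wedge at h
  by_cases hp₁ : p.1 = 0
  · have hp₂ : p.2 ≠ 0 := fun hp₂ => hp (Prod.ext hp₁ hp₂)
    refine ⟨x.2 / p.2, Prod.ext ?_ ?_⟩
    · have hx₁ : x.1 = 0 := by simpa [hp₁, hp₂] using h
      simp [hp₁, hx₁]
    · simp [hp₂]
  · refine ⟨x.1 / p.1, Prod.ext ?_ ?_⟩
    · simp [hp₁]
    · simp only [Prod.smul_snd, smul_eq_mul]
      field_simp
      linear_combination -h

theorem not_linearIndependent_of_mem_span_singleton {M : Type*} [AddCommGroup M] [Module K M]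
    {p x y : M} (hx : x ∈ K ∙ p) (hy : y ∈ K ∙ p) : ¬LinearIndependent K ![x, y] := by
  obtain ⟨s, rfl⟩ := Submodule.mem_span_singleton.1 hx
  obtain ⟨t, rfl⟩ := Submodule.mem_span_singleton.1 hy
  intro hli
  obtain ⟨ht, hs⟩ := LinearIndependent.pair_iff.1 hli t (-s) (by
    rw [smul_smul, smul_smul, ← add_smul, mul_comm, neg_mul, add_neg_cancel, zero_smul])
  exact hli.ne_zero 0 (by simp [neg_eq_zero.1 hs])

theorem dot_eq_zero_of_wedge_mul_wedge_eq_zero {p q x y : K × K}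
    (hli : LinearIndependent K ![x, y]) (hp : p ≠ 0) (hq : q ≠ 0)
    (hpq : p.1 * q.1 + p.2 * q.2 = 0) (hx : wedge p x * wedge q x = 0)
    (hy : wedge p y * wedge q y = 0) : x.1 * y.1 + x.2 * y.2 = 0 := by
  have parallel : ∀ {v}, wedge p v * wedge q v = 0 → v ∈ K ∙ p ∨ v ∈ K ∙ q := fun h =>
    (mul_eq_zero.1 h).imp (mem_span_singleton_of_wedge_eq_zero hp)
      (mem_span_singleton_of_wedge_eq_zero hq)
  rcases parallel hx with hx | hx <;> rcases parallel hy with hy | hy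
  · exact absurd hli (not_linearIndependent_of_mem_span_singleton hx hy)
  · exact dot_eq_zero_of_mem_span_singleton hx hy hpq
  · exact dot_eq_zero_of_mem_span_singleton hx hy (by linear_combination hpq)
  · exact absurd hli (not_linearIndependent_of_mem_span_singleton hx hy)

end Field

namespace Matrix

variable {ι R : Type*} [Fintype ι] [DecidableEq ι] [CommRing R] {H : Matrix ι ι R}

theorem mulVec_dotProduct_mulVec_of_transpose_mul_self (hH : Hᵀ * H = 1) (v w : ι → R) :
    H *ᵥ v ⬝ᵥ H *ᵥ w = v ⬝ᵥ w := by
  rw [dotProduct_mulVec, ← vecMul_transpose, vecMul_vecMul, hH, vecMul_one]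

theorem mulVec_ne_zero_of_transpose_mul_self (hH : Hᵀ * H = 1) {v : ι → R} (hv : v ≠ 0) :
    H *ᵥ v ≠ 0 := by
  intro h
  apply hv
  rw [← one_mulVec v, ← hH, ← mulVec_mulVec, h, mulVec_zero]

end Matrix

open Matrix in
theorem MemP1.exists_tensorPow_orthogonal {n : ℕ} {f : ℕ → ℂ} (hf : MemP1 n f) :
    ∃ u w : ℂ × ℂ, ∃ c d : ℂ, u ≠ 0 ∧ w ≠ 0 ∧ u.1 * w.1 + u.2 * w.2 = 0 ∧
      ∀ k ≤ n, f k = c * tensorPow n u k + d * tensorPow n w k := by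
  obtain ⟨H, c, β, hH, -, -, hfH⟩ := hf
  let toPair := LinearEquiv.finTwoArrow ℂ ℂ
  refine ⟨toPair (H *ᵥ ![1, 1]), toPair (H *ᵥ ![1, -1]), c, c * β,
    toPair.map_ne_zero_iff.2 (mulVec_ne_zero_of_transpose_mul_self hH (by simp [funext_iff])),
    toPair.map_ne_zero_iff.2 (mulVec_ne_zero_of_transpose_mul_self hH (by simp [funext_iff])),
    ?_, fun k hk => ?_⟩
  · simpa [toPair, dotProduct, Fin.sum_univ_two] using
      mulVec_dotProduct_mulVec_of_transpose_mul_self hH ![1, 1] ![1, -1]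
  · rw [hfH k hk]
    simp only [tensorPow, toPair, LinearEquiv.finTwoArrow_apply]
    ring

theorem stmt_7 (n : ℕ) (hn : 3 ≤ n) (a₀ b₀ a₁ b₁ : ℂ)
    (hli : LinearIndependent ℂ ![(a₀, b₀), (a₁, b₁)]) (f : ℕ → ℂ)
    (hf : ∀ k ≤ n, f k = a₀ ^ (n - k) * b₀ ^ k + a₁ ^ (n - k) * b₁ ^ k)
    (hmem : MemP1 n f) :
    a₀ * a₁ + b₀ * b₁ = 0 := by
  obtain ⟨u, w, c, d, hu, hw, huw, hfuw⟩ := hmem.exists_tensorPow_orthogonal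
  have hf' : ∀ k ≤ n, f k = 1 * tensorPow n (a₀, b₀) k + 1 * tensorPow n (a₁, b₁) k := by
    simpa [tensorPow] using hf
  have hQ : ∀ k ≤ n - 2,
      wedge u (a₀, b₀) * wedge w (a₀, b₀) * tensorPow (n - 2) (a₀, b₀) k +
        wedge u (a₁, b₁) * wedge w (a₁, b₁) * tensorPow (n - 2) (a₁, b₁) k = 0 := by
    intro k hk
    -- the same residual, computed from the two expressions of `f`
    have hres := recurrenceResidual_eq u w _ _ hf' (show k + 2 ≤ n by omega)
    have hres' := recurrenceResidual_eq u w _ _ hfuw (show k + 2 ≤ n by omega)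
    simp only [wedge_self, zero_mul, mul_zero, add_zero] at hres'
    linear_combination hres' - hres
  obtain ⟨h₀, h₁⟩ := hli.coeffs_eq_zero_of_tensorPow (by omega) hQ
  exact dot_eq_zero_of_wedge_mul_wedge_eq_zero hli hu hw huw h₀ h₁
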